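/- arXiv:2401.09191 — 2 statements merged into one kernel-verified Lean document; each statement's English description precedes it below -/
import Mathlib

section
/- Let (gᵗ) be generated by the greedy Sinkhorn iteration and let g* be a minimizer of 𝒢^L over all potentials. Then for every t ≥ 1, 𝒢^L(gᵗ) − 𝒢^L(g*) ≤ (R̄/η) · E_t. -/
open scoped ENNReal BigOperators

noncomputable section

/-- `S_K^L`: the nonempty subsets of `{1,…,K}` of size at most `L`. -/
def SKL (K L : ℕ) : Finset (Finset (Fin K)) :=
  Finset.univ.filter fun A => A.Nonempty ∧ A.card ≤ L

/-- `S_K^L(i)`: the members of `S_K^L` containing `i`. -/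
def SKLi (K L : ℕ) (i : Fin K) : Finset (Finset (Fin K)) :=
  (SKL K L).filter fun A => i ∈ A

variable {K : ℕ} (𝒳 : Fin K → Type*) [∀ i, Fintype (𝒳 i)] [∀ i, DecidableEq (𝒳 i)]

/-- The `i`-th marginal `Pᵢ#π_A` of a coupling `π_A` on `𝒳^A`
(zero when `i ∉ A`). -/
def marg (A : Finset (Fin K)) (π : ((j : A) → 𝒳 j.1) → ℝ) (i : Fin K) (xi : 𝒳 i) : ℝ :=
  if hi : i ∈ A then
    ∑ x : (j : A) → 𝒳 j.1, (if x ⟨i, hi⟩ = xi then π x else 0)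
  else 0

/-- `Σ_{A ∈ S_K^L(i)} Pᵢ#π_A`, evaluated at `xi`. -/
def totMarg (L : ℕ) (π : (A : Finset (Fin K)) → ((j : A) → 𝒳 j.1) → ℝ)
    (i : Fin K) (xi : 𝒳 i) : ℝ :=
  ∑ A ∈ SKLi K L i, marg 𝒳 A (π A) i xi

/-- The couplings `π_A(g)` induced by potentials `g`, interpreted as `0` where the
cost is `+∞`. -/
def piInd (η : ℝ) (c : (A : Finset (Fin K)) → ((j : A) → 𝒳 j.1) → ℝ≥0∞)
    (g : (i : Fin K) → 𝒳 i → ℝ) (A : Finset (Fin K)) (x : (j : A) → 𝒳 j.1) : ℝ :=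
  if c A x = ⊤ then 0
  else Real.exp ((∑ j : A, g j.1 (x j) - (1 + (c A x).toReal)) / η)

/-- The dual objective `𝒢^L`. -/
def dualObj (η : ℝ) (L : ℕ) (c : (A : Finset (Fin K)) → ((j : A) → 𝒳 j.1) → ℝ≥0∞)
    (μ : (i : Fin K) → 𝒳 i → ℝ) (g : (i : Fin K) → 𝒳 i → ℝ) : ℝ :=
  (∑ A ∈ SKL K L, ∑ x : (j : A) → 𝒳 j.1, piInd 𝒳 η c g A x)
    - (1 / η) * ∑ i : Fin K, ∑ xi : 𝒳 i, g i xi * μ i xi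

/-- Unnormalized Kullback–Leibler divergence (convention `0 · log 0 = 0`). -/
def KLdiv {Z : Type*} [Fintype Z] (α β : Z → ℝ) : ℝ :=
  (∑ z, (β z - α z)) + ∑ z, α z * Real.log (α z / β z)

/-- ℓ¹ norm of a vector on a finite set. -/
def l1 {Z : Type*} [Fintype Z] (v : Z → ℝ) : ℝ := ∑ z, |v z|

/-- `g : ℕ → potentials` is generated by the greedy Sinkhorn iteration: `g⁰ = 0`,
and at each step a coordinate `I` maximizing the KL-discrepancy of the `I`-th
marginal is updated by the Sinkhorn formula, all others kept fixed. -/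
def IsGreedySinkhorn (η : ℝ) (L : ℕ)
    (c : (A : Finset (Fin K)) → ((j : A) → 𝒳 j.1) → ℝ≥0∞)
    (μ : (i : Fin K) → 𝒳 i → ℝ) (g : ℕ → (i : Fin K) → 𝒳 i → ℝ) : Prop :=
  (∀ i xi, g 0 i xi = 0) ∧
  ∀ t : ℕ, ∃ I : Fin K,
    (∀ i : Fin K,
      KLdiv (μ i) (totMarg 𝒳 L (piInd 𝒳 η c (g t)) i) ≤
        KLdiv (μ I) (totMarg 𝒳 L (piInd 𝒳 η c (g t)) I)) ∧
    (∀ xI : 𝒳 I, g (t + 1) I xI =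
      g t I xI + η * Real.log (μ I xI)
        - η * Real.log (totMarg 𝒳 L (piInd 𝒳 η c (g t)) I xI)) ∧
    (∀ i : Fin K, i ≠ I → g (t + 1) i = g t i)

/-- The marginal error `E_t` of the greedy Sinkhorn iteration. -/
def Err (η : ℝ) (L : ℕ) (c : (A : Finset (Fin K)) → ((j : A) → 𝒳 j.1) → ℝ≥0∞)
    (μ : (i : Fin K) → 𝒳 i → ℝ) (g : ℕ → (i : Fin K) → 𝒳 i → ℝ) (t : ℕ) : ℝ :=
  ∑ i : Fin K,
    l1 (fun xi : 𝒳 i => μ i xi - totMarg 𝒳 L (piInd 𝒳 η c (g t)) i xi)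

/-- `C* := maxᵢ nᵢ / n`. -/
def Cstar (n : ℝ) : ℝ := ((Finset.univ.sup fun i : Fin K => Fintype.card (𝒳 i) : ℕ) : ℝ) / n

/-- `min_{j, y} μ_j(y)`. -/
def muMin (μ : (i : Fin K) → 𝒳 i → ℝ) : ℝ :=
  sInf {v : ℝ | ∃ (j : Fin K) (y : 𝒳 j), v = μ j y}

/-- `R̄ := L − η log min_{j,y} μ_j(y) + η L log(K C* n)`. -/
def Rbar (η : ℝ) (L : ℕ) (n : ℝ) (μ : (i : Fin K) → 𝒳 i → ℝ) : ℝ :=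
  (L : ℝ) - η * Real.log (muMin 𝒳 μ) + η * L * Real.log (K * Cstar 𝒳 n * n)

/-!
By convexity of `exp`, `𝒢(gᵗ) - 𝒢(g*) ≤ (1/η) ∑ (gᵗ - g*)(T(gᵗ) - μ)`, where `T(g)ᵢ` is the total
marginal `∑_{A ∋ i} Pᵢ#π_A(g)`; so it suffices to show `|gᵗ - g*| ≤ R̄` pointwise.
The singleton coupling gives `T(g)ᵢ ≥ exp((gᵢ - 1)/η)`, and if `g ≤ 1` then counting
`|S_K^L| ≤ K^L`, `|𝒳^A| ≤ (maxᵢ nᵢ)^L` gives `T(g)ᵢ ≤ (K maxᵢ nᵢ)^L exp((gᵢ + L - 2)/η)`.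
Hence the Sinkhorn update `g + η log μ - η log T(g)` of a potential `g ≤ 1` lies in `[2 - R̄, 1]`.
First-order optimality gives `T(g*) = μ`, so `g*` is a fixed point of the update and lies in
`[2 - R̄, 1]`, while the iterates, starting from `0`, stay in `[1 - R̄, 1]`.
-/

open Finset Real

lemma sum_mul_le_mul_sum_abs {Z : Type*} [Fintype Z] {a : Z → ℝ} {R : ℝ} (ha : ∀ z, |a z| ≤ R)
    (b : Z → ℝ) : ∑ z, a z * b z ≤ R * ∑ z, |b z| := by
  rw [mul_sum]
  refine sum_le_sum fun z _ => ?_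
  calc a z * b z ≤ |a z| * |b z| := abs_mul (a z) (b z) ▸ le_abs_self _
    _ ≤ R * |b z| := by gcongr; exact ha z

lemma le_one_of_sum_sum_eq_one {ι : Type*} [Fintype ι] {Z : ι → Type*} [∀ i, Fintype (Z i)]
    {μ : (i : ι) → Z i → ℝ} (hμ : ∀ i z, 0 ≤ μ i z) (hmass : ∑ i, ∑ z, μ i z = 1) (i : ι)
    (z : Z i) : μ i z ≤ 1 :=
  hmass ▸ (single_le_sum (fun z _ => hμ i z) (mem_univ z)).trans
    (single_le_sum (f := fun i => ∑ z, μ i z) (fun i _ => sum_nonneg fun z _ => hμ i z)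
      (mem_univ i))

section Constants

variable {K : ℕ} (𝒳 : Fin K → Type*) [∀ i, Fintype (𝒳 i)]

def maxCard : ℕ := univ.sup fun i : Fin K => Fintype.card (𝒳 i)

variable {𝒳}

lemma card_le_maxCard (i : Fin K) : Fintype.card (𝒳 i) ≤ maxCard 𝒳 :=
  le_sup (f := fun i => Fintype.card (𝒳 i)) (mem_univ i)

lemma one_le_maxCard {i : Fin K} (xi : 𝒳 i) : 1 ≤ maxCard 𝒳 :=
  (Fintype.card_pos_iff.mpr ⟨xi⟩).trans_le (card_le_maxCard i)

lemma card_pi_le_maxCard_pow {A : Finset (Fin K)} {L : ℕ} (hA : #A ≤ L) {i : Fin K}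
    (xi : 𝒳 i) : Fintype.card ((j : A) → 𝒳 j.1) ≤ maxCard 𝒳 ^ L := by
  rw [Fintype.card_pi]
  calc ∏ j : A, Fintype.card (𝒳 j.1) ≤ maxCard 𝒳 ^ #(univ : Finset A) :=
        prod_le_pow_card _ _ _ fun j _ => card_le_maxCard j.1
    _ ≤ maxCard 𝒳 ^ L := by
        gcongr
        · exact one_le_maxCard xi
        · simpa using hA

lemma Cstar_mul {n : ℝ} (hn : n ≠ 0) : Cstar 𝒳 n * n = maxCard 𝒳 :=
  div_mul_cancel₀ _ hn

lemma muMin_le (μ : (i : Fin K) → 𝒳 i → ℝ) (i : Fin K) (xi : 𝒳 i) : muMin 𝒳 μ ≤ μ i xi :=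
  csInf_le ((Set.finite_range fun p : Σ j, 𝒳 j => μ p.1 p.2).subset
    (by rintro _ ⟨j, y, rfl⟩; exact ⟨⟨j, y⟩, rfl⟩)).bddBelow ⟨i, xi, rfl⟩

lemma muMin_pos {μ : (i : Fin K) → 𝒳 i → ℝ} (hμ : ∀ i xi, 0 < μ i xi) {i : Fin K} (xi : 𝒳 i) :
    0 < muMin 𝒳 μ := by
  have hrange : {v : ℝ | ∃ (j : Fin K) (y : 𝒳 j), v = μ j y} =
      Set.range fun p : Σ j, 𝒳 j => μ p.1 p.2 := by
    ext v
    exact ⟨fun ⟨j, y, hv⟩ => ⟨⟨j, y⟩, hv.symm⟩, fun ⟨p, hp⟩ => ⟨p.1, p.2, hp.symm⟩⟩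
  obtain ⟨p, hp⟩ : muMin 𝒳 μ ∈ Set.range fun p : Σ j, 𝒳 j => μ p.1 p.2 := by
    rw [muMin, hrange]
    exact Set.Nonempty.csInf_mem ⟨_, ⟨i, xi⟩, rfl⟩ (Set.finite_range _)
  exact hp ▸ hμ p.1 p.2

variable {η : ℝ} {L : ℕ} {n : ℝ} {μ : (i : Fin K) → 𝒳 i → ℝ}

lemma Rbar_eq (hn : n ≠ 0) :
    Rbar 𝒳 η L n μ = L - η * log (muMin 𝒳 μ) + η * L * log (K * maxCard 𝒳) := by
  rw [Rbar, mul_assoc (K : ℝ), Cstar_mul hn]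

lemma one_le_Rbar (hη : 0 ≤ η) (hL : 1 ≤ L) (hn : n ≠ 0) (hμ : ∀ j y, 0 < μ j y)
    {i : Fin K} {xi : 𝒳 i} (hμ1 : μ i xi ≤ 1) : 1 ≤ Rbar 𝒳 η L n μ := by
  have hlogμ : log (muMin 𝒳 μ) ≤ 0 :=
    log_nonpos (muMin_pos hμ xi).le ((muMin_le μ i xi).trans hμ1)
  have hlogKn : 0 ≤ log (K * maxCard 𝒳) := by
    have hK : (1 : ℝ) ≤ K := by exact_mod_cast Fin.pos i
    have hmax : (1 : ℝ) ≤ maxCard 𝒳 := by exact_mod_cast one_le_maxCard xi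
    exact log_nonneg (one_le_mul_of_one_le_of_one_le hK hmax)
  have hL' : (1 : ℝ) ≤ L := by exact_mod_cast hL
  rw [Rbar_eq hn]
  nlinarith [mul_nonneg (mul_nonneg hη (by linarith : (0 : ℝ) ≤ L)) hlogKn,
    mul_nonpos_of_nonneg_of_nonpos hη hlogμ]

end Constants

lemma card_SKL_le (K L : ℕ) : #(SKL K L) ≤ K ^ L := by
  have hsurj : Set.SurjOn (fun f : Fin L → Fin K => univ.image f)
      (univ : Finset (Fin L → Fin K)) (SKL K L) := by
    intro A hA
    simp only [SKL, coe_filter, mem_univ, true_and, Set.mem_ofPred_eq] at hA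
    obtain ⟨f, hf⟩ : ∃ f : Fin L → A, Function.Surjective f :=
      Function.exists_surjective_iff.mpr ⟨⟨fun _ => ⟨_, hA.1.choose_spec⟩⟩,
        Function.Embedding.nonempty_of_card_le (by simpa using hA.2)⟩
    refine ⟨fun j => (f j).1, mem_coe.mpr (mem_univ _), ?_⟩
    ext a
    simp only [mem_image, mem_univ, true_and]
    exact ⟨fun ⟨j, hj⟩ => hj ▸ (f j).2, fun ha => (hf ⟨a, ha⟩).imp fun j hj => by rw [hj]⟩
  simpa using card_le_card_of_surjOn _ hsurj

lemma singleton_mem_SKLi {K L : ℕ} (hL : 1 ≤ L) (i : Fin K) : {i} ∈ SKLi K L i := by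
  simp [SKLi, SKL, hL]

section DualObjective

variable {K L : ℕ} {𝒳 : Fin K → Type*} {η : ℝ}
  {c : (A : Finset (Fin K)) → ((j : A) → 𝒳 j.1) → ℝ≥0∞}

lemma piInd_nonneg (g : (i : Fin K) → 𝒳 i → ℝ) (A : Finset (Fin K)) (x : (j : A) → 𝒳 j.1) :
    0 ≤ piInd 𝒳 η c g A x := by
  unfold piInd
  split_ifs <;> positivity

lemma piInd_eq_mul_exp (g g' : (i : Fin K) → 𝒳 i → ℝ) (A : Finset (Fin K))
    (x : (j : A) → 𝒳 j.1) :
    piInd 𝒳 η c g' A x =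
      piInd 𝒳 η c g A x * exp ((∑ j : A, (g' j.1 (x j) - g j.1 (x j))) / η) := by
  unfold piInd
  split_ifs
  · simp
  · rw [← exp_add, sum_sub_distrib]
    ring_nf

lemma piInd_le (hη : 0 < η) {g : (i : Fin K) → 𝒳 i → ℝ} (hg : ∀ j y, g j y ≤ 1)
    {A : Finset (Fin K)} (hA : #A ≤ L) {i : Fin K} (hi : i ∈ A) (x : (j : A) → 𝒳 j.1) :
    piInd 𝒳 η c g A x ≤ exp ((g i (x ⟨i, hi⟩) - 1 + (L - 1)) / η) := by
  unfold piInd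
  split_ifs
  · positivity
  · gcongr
    have hrest : ∑ j ∈ univ.erase ⟨i, hi⟩, g j.1 (x j) ≤ #(univ.erase (⟨i, hi⟩ : A)) := by
      simpa only [nsmul_eq_mul, mul_one] using
        sum_le_card_nsmul _ (fun j : A => g j.1 (x j)) 1 fun j _ => hg j.1 (x j)
    have hcard : (#(univ.erase (⟨i, hi⟩ : A)) : ℝ) + 1 ≤ L := by
      rw [← Nat.cast_one, ← Nat.cast_add, card_erase_add_one (mem_univ _), card_univ,
        Fintype.card_coe]
      exact_mod_cast hA
    rw [← add_sum_erase _ _ (mem_univ ⟨i, hi⟩)]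
    linarith [ENNReal.toReal_nonneg (a := c A x)]

variable [∀ i, Fintype (𝒳 i)] [∀ i, DecidableEq (𝒳 i)]

lemma marg_nonneg {A : Finset (Fin K)} {γ : ((j : A) → 𝒳 j.1) → ℝ} (hγ : ∀ x, 0 ≤ γ x)
    (i : Fin K) (xi : 𝒳 i) : 0 ≤ marg 𝒳 A γ i xi := by
  unfold marg
  split_ifs
  · exact sum_nonneg fun x _ => by split_ifs <;> simp [hγ x]
  · rfl

lemma sum_mul_apply_eq_sum_mul_marg {A : Finset (Fin K)} (γ : ((j : A) → 𝒳 j.1) → ℝ)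
    {i : Fin K} (hi : i ∈ A) (δ : 𝒳 i → ℝ) :
    ∑ x, γ x * δ (x ⟨i, hi⟩) = ∑ xi, δ xi * marg 𝒳 A γ i xi := by
  simp only [marg, dif_pos hi, mul_sum, mul_ite, mul_zero]
  rw [sum_comm]
  refine sum_congr rfl fun x _ => ?_
  rw [sum_ite_eq, if_pos (mem_univ _), mul_comm]

lemma sum_mul_sum_eq_sum_mul_totMarg (γ : (A : Finset (Fin K)) → ((j : A) → 𝒳 j.1) → ℝ)
    (δ : (i : Fin K) → 𝒳 i → ℝ) :
    ∑ A ∈ SKL K L, ∑ x, γ A x * ∑ j : A, δ j.1 (x j) =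
      ∑ i, ∑ xi, δ i xi * totMarg 𝒳 L γ i xi := by
  have hA : ∀ A : Finset (Fin K), ∑ x, γ A x * ∑ j : A, δ j.1 (x j) =
      ∑ i ∈ A, ∑ xi, δ i xi * marg 𝒳 A (γ A) i xi := by
    intro A
    simp_rw [mul_sum]
    rw [sum_comm, ← sum_attach A, univ_eq_attach]
    exact sum_congr rfl fun j _ => sum_mul_apply_eq_sum_mul_marg (γ A) j.2 (δ j.1)
  simp_rw [hA, totMarg, mul_sum]
  rw [sum_comm' (t' := univ) (s' := SKLi K L) (by simp [SKLi])]
  exact sum_congr rfl fun i _ => sum_comm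

lemma dualObj_sub_le (μ : (i : Fin K) → 𝒳 i → ℝ) (g g' : (i : Fin K) → 𝒳 i → ℝ) :
    dualObj 𝒳 η L c μ g - dualObj 𝒳 η L c μ g' ≤
      (1 / η) * ∑ i, ∑ xi, (g i xi - g' i xi) * (totMarg 𝒳 L (piInd 𝒳 η c g) i xi - μ i xi) := by
  have hγ : ∀ A x, piInd 𝒳 η c g A x - piInd 𝒳 η c g' A x ≤
      (1 / η) * (piInd 𝒳 η c g A x * ∑ j : A, (g j.1 (x j) - g' j.1 (x j))) := by
    intro A x
    rw [piInd_eq_mul_exp g g' A x, show ∑ j : A, (g' j.1 (x j) - g j.1 (x j)) =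
      -∑ j : A, (g j.1 (x j) - g' j.1 (x j)) by simp only [← sum_neg_distrib, neg_sub]]
    generalize ∑ j : A, (g j.1 (x j) - g' j.1 (x j)) = a
    have hexp := mul_le_mul_of_nonneg_left (add_one_le_exp (-a / η))
      (piInd_nonneg (c := c) (η := η) g A x)
    calc piInd 𝒳 η c g A x - piInd 𝒳 η c g A x * exp (-a / η)
        ≤ piInd 𝒳 η c g A x - piInd 𝒳 η c g A x * (-a / η + 1) := by linarith
      _ = (1 / η) * (piInd 𝒳 η c g A x * a) := by ring
  have hsum : (∑ A ∈ SKL K L, ∑ x, piInd 𝒳 η c g A x) - ∑ A ∈ SKL K L, ∑ x, piInd 𝒳 η c g' A x ≤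
      (1 / η) * ∑ i, ∑ xi, (g i xi - g' i xi) * totMarg 𝒳 L (piInd 𝒳 η c g) i xi := by
    rw [← sum_mul_sum_eq_sum_mul_totMarg, mul_sum]
    simp only [← sum_sub_distrib, mul_sum]
    gcongr with A _ x
    simpa only [mul_sum] using hγ A x
  simp only [dualObj, sub_mul, mul_sub, sum_sub_distrib] at hsum ⊢
  linarith

lemma hasDerivAt_dualObj_line (μ : (i : Fin K) → 𝒳 i → ℝ) (g e : (i : Fin K) → 𝒳 i → ℝ) :
    HasDerivAt (fun s : ℝ => dualObj 𝒳 η L c μ fun i xi => g i xi + s * e i xi)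
      ((1 / η) * ∑ i, ∑ xi, e i xi * (totMarg 𝒳 L (piInd 𝒳 η c g) i xi - μ i xi)) 0 := by
  have hline : (fun s : ℝ => dualObj 𝒳 η L c μ fun i xi => g i xi + s * e i xi) = fun s =>
      (∑ A ∈ SKL K L, ∑ x, piInd 𝒳 η c g A x * exp (s * ((∑ j : A, e j.1 (x j)) / η))) -
        (1 / η) * ((∑ i, ∑ xi, g i xi * μ i xi) + s * ∑ i, ∑ xi, e i xi * μ i xi) := by
    funext s
    simp only [dualObj, add_mul, sum_add_distrib, mul_sum, mul_assoc]
    congr 1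
    refine sum_congr rfl fun A _ => sum_congr rfl fun x _ => ?_
    rw [piInd_eq_mul_exp g]
    simp only [add_sub_cancel_left, ← mul_sum, mul_div_assoc]
  have hterm : ∀ (p a : ℝ), HasDerivAt (fun s : ℝ => p * exp (s * a)) (p * a) 0 := by
    intro p a
    simpa using ((hasDerivAt_mul_const (x := 0) a).exp).const_mul p
  have hpairing : HasDerivAt (fun s : ℝ =>
      ∑ A ∈ SKL K L, ∑ x, piInd 𝒳 η c g A x * exp (s * ((∑ j : A, e j.1 (x j)) / η)))
      (∑ A ∈ SKL K L, ∑ x, piInd 𝒳 η c g A x * ((∑ j : A, e j.1 (x j)) / η)) 0 :=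
    HasDerivAt.fun_sum fun A _ => HasDerivAt.fun_sum fun x _ => hterm _ _
  have hlinear : HasDerivAt (fun s : ℝ =>
      (1 / η) * ((∑ i, ∑ xi, g i xi * μ i xi) + s * ∑ i, ∑ xi, e i xi * μ i xi))
      ((1 / η) * ∑ i, ∑ xi, e i xi * μ i xi) 0 :=
    ((hasDerivAt_mul_const _).const_add _).const_mul _
  rw [hline]
  refine (hpairing.fun_sub hlinear).congr_deriv ?_
  simp only [mul_sub, sum_sub_distrib]
  rw [← sum_mul_sum_eq_sum_mul_totMarg]
  congr 1
  rw [mul_sum]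
  refine sum_congr rfl fun A _ => ?_
  rw [mul_sum]
  exact sum_congr rfl fun x _ => by ring

lemma totMarg_eq_of_isMinimizer (hη : 0 < η) {μ gstar : (i : Fin K) → 𝒳 i → ℝ}
    (hstar : ∀ g', dualObj 𝒳 η L c μ gstar ≤ dualObj 𝒳 η L c μ g') (i : Fin K) (xi : 𝒳 i) :
    totMarg 𝒳 L (piInd 𝒳 η c gstar) i xi = μ i xi := by
  set e : (i : Fin K) → 𝒳 i → ℝ := fun i xi => totMarg 𝒳 L (piInd 𝒳 η c gstar) i xi - μ i xi
  have hmin : IsLocalMin (fun s : ℝ => dualObj 𝒳 η L c μ fun i xi => gstar i xi + s * e i xi) 0 :=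
    Filter.Eventually.of_forall fun s => by simpa only [zero_mul, add_zero] using hstar _
  -- the derivative along the direction `e = T(g*) - μ` is `‖e‖² / η`
  have hsq : ∑ i, ∑ xi, e i xi * e i xi = 0 := by
    have := hmin.hasDerivAt_eq_zero (hasDerivAt_dualObj_line μ gstar e)
    simpa [hη.ne'] using this
  have hi := (Fintype.sum_eq_zero_iff_of_nonneg fun i =>
    sum_nonneg fun xi _ => mul_self_nonneg (e i xi)).mp hsq
  have hxi := (Fintype.sum_eq_zero_iff_of_nonneg fun xi => mul_self_nonneg (e i xi)).mp
    (congrFun hi i)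
  exact sub_eq_zero.mp (mul_self_eq_zero.mp (congrFun hxi xi))

lemma exp_le_totMarg (hL : 1 ≤ L)
    (hc : ∀ (i : Fin K) (x : (j : ({i} : Finset (Fin K))) → 𝒳 j.1), c {i} x = 0)
    (g : (i : Fin K) → 𝒳 i → ℝ) (i : Fin K) (xi : 𝒳 i) :
    exp ((g i xi - 1) / η) ≤ totMarg 𝒳 L (piInd 𝒳 η c g) i xi := by
  let x : (j : ({i} : Finset (Fin K))) → 𝒳 j.1 := fun j =>
    cast (congrArg 𝒳 (mem_singleton.mp j.2).symm) xi
  have hx : x ⟨i, mem_singleton_self i⟩ = xi := rfl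
  have hpi : piInd 𝒳 η c g {i} x = exp ((g i xi - 1) / η) := by
    rw [piInd, hc, if_neg ENNReal.zero_ne_top, ENNReal.toReal_zero, add_zero,
      Fintype.sum_eq_single ⟨i, mem_singleton_self i⟩
        fun j hj => absurd (Subtype.ext (mem_singleton.mp j.2)) hj]
    rfl
  calc exp ((g i xi - 1) / η)
      = if x ⟨i, mem_singleton_self i⟩ = xi then piInd 𝒳 η c g {i} x else 0 := by
        rw [if_pos hx, hpi]
    _ ≤ marg 𝒳 {i} (piInd 𝒳 η c g {i}) i xi := by
        rw [marg, dif_pos (mem_singleton_self i)]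
        exact single_le_sum
          (f := fun y => if y ⟨i, mem_singleton_self i⟩ = xi then piInd 𝒳 η c g {i} y else 0)
          (fun y _ => by split_ifs <;> simp [piInd_nonneg]) (mem_univ x)
    _ ≤ totMarg 𝒳 L (piInd 𝒳 η c g) i xi :=
        single_le_sum (f := fun A => marg 𝒳 A (piInd 𝒳 η c g A) i xi)
          (fun A _ => marg_nonneg (piInd_nonneg g A) i xi) (singleton_mem_SKLi hL i)

lemma marg_le (hη : 0 < η) {g : (i : Fin K) → 𝒳 i → ℝ} (hg : ∀ j y, g j y ≤ 1)
    {A : Finset (Fin K)} (hA : #A ≤ L) {i : Fin K} (hi : i ∈ A) (xi : 𝒳 i) :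
    marg 𝒳 A (piInd 𝒳 η c g A) i xi ≤ maxCard 𝒳 ^ L * exp ((g i xi - 1 + (L - 1)) / η) := by
  rw [marg, dif_pos hi]
  calc ∑ x, (if x ⟨i, hi⟩ = xi then piInd 𝒳 η c g A x else 0)
      ≤ ∑ _x : (j : A) → 𝒳 j.1, exp ((g i xi - 1 + (L - 1)) / η) := by
        gcongr with x
        split_ifs with hx
        · exact hx ▸ piInd_le hη hg hA hi x
        · positivity
    _ ≤ maxCard 𝒳 ^ L * exp ((g i xi - 1 + (L - 1)) / η) := by
        rw [sum_const, card_univ, nsmul_eq_mul]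
        gcongr
        exact_mod_cast card_pi_le_maxCard_pow hA xi

lemma totMarg_le (hη : 0 < η) {g : (i : Fin K) → 𝒳 i → ℝ} (hg : ∀ j y, g j y ≤ 1)
    (i : Fin K) (xi : 𝒳 i) :
    totMarg 𝒳 L (piInd 𝒳 η c g) i xi ≤
      (K * maxCard 𝒳) ^ L * exp ((g i xi - 1 + (L - 1)) / η) := by
  calc totMarg 𝒳 L (piInd 𝒳 η c g) i xi
      ≤ ∑ _A ∈ SKLi K L i, maxCard 𝒳 ^ L * exp ((g i xi - 1 + (L - 1)) / η) :=
        sum_le_sum fun A hA => marg_le hη hg (mem_filter.mp (mem_filter.mp hA).1).2.2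
          (mem_filter.mp hA).2 xi
    _ ≤ (K * maxCard 𝒳) ^ L * exp ((g i xi - 1 + (L - 1)) / η) := by
        rw [sum_const, nsmul_eq_mul, mul_pow, mul_assoc]
        gcongr
        exact_mod_cast (card_filter_le _ _).trans (card_SKL_le K L)

def sinkhornUpdate (η : ℝ) (L : ℕ) (c : (A : Finset (Fin K)) → ((j : A) → 𝒳 j.1) → ℝ≥0∞)
    (μ g : (i : Fin K) → 𝒳 i → ℝ) (i : Fin K) (xi : 𝒳 i) : ℝ :=
  g i xi + η * log (μ i xi) - η * log (totMarg 𝒳 L (piInd 𝒳 η c g) i xi)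

variable {μ : (i : Fin K) → 𝒳 i → ℝ} {n : ℝ}

lemma sinkhornUpdate_le_one (hη : 0 < η) (hL : 1 ≤ L)
    (hc : ∀ (i : Fin K) (x : (j : ({i} : Finset (Fin K))) → 𝒳 j.1), c {i} x = 0)
    (g : (i : Fin K) → 𝒳 i → ℝ) {i : Fin K} {xi : 𝒳 i} (hμ : 0 < μ i xi) (hμ1 : μ i xi ≤ 1) :
    sinkhornUpdate η L c μ g i xi ≤ 1 := by
  have hT := exp_le_totMarg (η := η) hL hc g i xi
  have hlogT : g i xi - 1 ≤ η * log (totMarg 𝒳 L (piInd 𝒳 η c g) i xi) :=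
    (div_le_iff₀' hη).mp ((le_log_iff_exp_le ((exp_pos _).trans_le hT)).mpr hT)
  have hlogμ : η * log (μ i xi) ≤ 0 := mul_nonpos_of_nonneg_of_nonpos hη.le (log_nonpos hμ.le hμ1)
  unfold sinkhornUpdate
  linarith

lemma two_sub_Rbar_le_sinkhornUpdate (hη : 0 < η) (hL : 1 ≤ L)
    (hc : ∀ (i : Fin K) (x : (j : ({i} : Finset (Fin K))) → 𝒳 j.1), c {i} x = 0)
    (hn : n ≠ 0) (hμ : ∀ j y, 0 < μ j y) {g : (i : Fin K) → 𝒳 i → ℝ} (hg : ∀ j y, g j y ≤ 1)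
    (i : Fin K) (xi : 𝒳 i) : 2 - Rbar 𝒳 η L n μ ≤ sinkhornUpdate η L c μ g i xi := by
  have hTpos := (exp_pos _).trans_le (exp_le_totMarg (η := η) hL hc g i xi)
  have hKn : 0 < (K : ℝ) * maxCard 𝒳 := by
    have := one_le_maxCard xi
    have := Fin.pos i
    positivity
  have hlogT : η * log (totMarg 𝒳 L (piInd 𝒳 η c g) i xi) ≤
      η * (L * log (K * maxCard 𝒳)) + (g i xi - 1 + (L - 1)) := by
    have := log_le_log hTpos (totMarg_le hη hg i xi)
    rw [log_mul (by positivity) (exp_pos _).ne', log_pow, log_exp] at this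
    have := mul_le_mul_of_nonneg_left this hη.le
    rwa [mul_add, mul_div_cancel₀ _ hη.ne'] at this
  have hlogμ : η * log (muMin 𝒳 μ) ≤ η * log (μ i xi) :=
    mul_le_mul_of_nonneg_left (log_le_log (muMin_pos hμ xi) (muMin_le μ i xi)) hη.le
  rw [Rbar_eq hn]
  unfold sinkhornUpdate
  linarith

lemma sinkhornUpdate_eq_self_of_isMinimizer (hη : 0 < η) {gstar : (i : Fin K) → 𝒳 i → ℝ}
    (hstar : ∀ g', dualObj 𝒳 η L c μ gstar ≤ dualObj 𝒳 η L c μ g') (i : Fin K) (xi : 𝒳 i) :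
    sinkhornUpdate η L c μ gstar i xi = gstar i xi := by
  rw [sinkhornUpdate, totMarg_eq_of_isMinimizer hη hstar]
  ring

lemma mem_Icc_of_isMinimizer (hη : 0 < η) (hL : 1 ≤ L)
    (hc : ∀ (i : Fin K) (x : (j : ({i} : Finset (Fin K))) → 𝒳 j.1), c {i} x = 0)
    (hn : n ≠ 0) (hμ : ∀ j y, 0 < μ j y) (hμ1 : ∀ j y, μ j y ≤ 1)
    {gstar : (i : Fin K) → 𝒳 i → ℝ}
    (hstar : ∀ g', dualObj 𝒳 η L c μ gstar ≤ dualObj 𝒳 η L c μ g') (i : Fin K) (xi : 𝒳 i) :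
    gstar i xi ∈ Set.Icc (2 - Rbar 𝒳 η L n μ) 1 := by
  have hfix := sinkhornUpdate_eq_self_of_isMinimizer hη hstar
  have hle : ∀ j y, gstar j y ≤ 1 := fun j y =>
    hfix j y ▸ sinkhornUpdate_le_one hη hL hc gstar (hμ j y) (hμ1 j y)
  exact ⟨hfix i xi ▸ two_sub_Rbar_le_sinkhornUpdate hη hL hc hn hμ hle i xi, hle i xi⟩

lemma IsGreedySinkhorn.mem_Icc {g : ℕ → (i : Fin K) → 𝒳 i → ℝ}
    (hg : IsGreedySinkhorn 𝒳 η L c μ g) (hη : 0 < η) (hL : 1 ≤ L)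
    (hc : ∀ (i : Fin K) (x : (j : ({i} : Finset (Fin K))) → 𝒳 j.1), c {i} x = 0)
    (hn : n ≠ 0) (hμ : ∀ j y, 0 < μ j y) (hμ1 : ∀ j y, μ j y ≤ 1) (t : ℕ) (i : Fin K)
    (xi : 𝒳 i) : g t i xi ∈ Set.Icc (1 - Rbar 𝒳 η L n μ) 1 := by
  induction t generalizing i with
  | zero =>
    have := one_le_Rbar hη.le hL hn hμ (hμ1 i xi)
    rw [hg.1 i xi]
    constructor <;> linarith
  | succ t ih =>
    obtain ⟨I, -, hupdate, hkeep⟩ := hg.2 t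
    by_cases hiI : i = I
    · subst hiI
      have hlower := two_sub_Rbar_le_sinkhornUpdate hη hL hc hn hμ (fun j y => (ih j y).2) i xi
      rw [hupdate xi]
      exact ⟨by unfold sinkhornUpdate at hlower; linarith,
        sinkhornUpdate_le_one hη hL hc (g t) (hμ i xi) (hμ1 i xi)⟩
    · rw [hkeep i hiI]
      exact ih i xi

end DualObjective

theorem stmt11_general (K L : ℕ) (hL : 1 ≤ L)
    (𝒳 : Fin K → Type*) [∀ i, Fintype (𝒳 i)] [∀ i, DecidableEq (𝒳 i)]
    (η : ℝ) (hη : 0 < η) (n : ℝ) (hn : 0 < n)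
    (c : (A : Finset (Fin K)) → ((j : A) → 𝒳 j.1) → ℝ≥0∞)
    (hc : ∀ (i : Fin K) (x : (j : ({i} : Finset (Fin K))) → 𝒳 j.1), c {i} x = 0)
    (μ : (i : Fin K) → 𝒳 i → ℝ) (hμpos : ∀ i xi, 0 < μ i xi)
    (hmass : ∑ i : Fin K, ∑ xi : 𝒳 i, μ i xi = 1)
    (g : ℕ → (i : Fin K) → 𝒳 i → ℝ)
    (hg : IsGreedySinkhorn 𝒳 η L c μ g)
    (gstar : (i : Fin K) → 𝒳 i → ℝ)
    (hstar : ∀ g' : (i : Fin K) → 𝒳 i → ℝ,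
      dualObj 𝒳 η L c μ gstar ≤ dualObj 𝒳 η L c μ g') :
    ∀ t : ℕ, 1 ≤ t →
      dualObj 𝒳 η L c μ (g t) - dualObj 𝒳 η L c μ gstar ≤
        (Rbar 𝒳 η L n μ / η) * Err 𝒳 η L c μ g t := by
  intro t _
  have hμ1 := le_one_of_sum_sum_eq_one (fun i xi => (hμpos i xi).le) hmass
  have hdist : ∀ i xi, |gstar i xi - g t i xi| ≤ Rbar 𝒳 η L n μ := fun i xi => by
    have ht := hg.mem_Icc hη hL hc hn.ne' hμpos hμ1 t i xi
    have hstar' := mem_Icc_of_isMinimizer hη hL hc hn.ne' hμpos hμ1 hstar i xi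
    rw [abs_sub_le_iff]
    constructor <;> linarith [ht.1, ht.2, hstar'.1, hstar'.2]
  calc dualObj 𝒳 η L c μ (g t) - dualObj 𝒳 η L c μ gstar
      ≤ (1 / η) * ∑ i, ∑ xi, (gstar i xi - g t i xi) *
          (μ i xi - totMarg 𝒳 L (piInd 𝒳 η c (g t)) i xi) := by
        refine (dualObj_sub_le μ (g t) gstar).trans_eq ?_
        congr 1
        exact sum_congr rfl fun i _ => sum_congr rfl fun xi _ => by ring
    _ ≤ (1 / η) * (Rbar 𝒳 η L n μ * Err 𝒳 η L c μ g t) := by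
        gcongr (1 / η) * ?_
        rw [Err, mul_sum]
        gcongr with i
        exact sum_mul_le_mul_sum_abs (hdist i) _
    _ = (Rbar 𝒳 η L n μ / η) * Err 𝒳 η L c μ g t := by ring

/-- along the greedy Sinkhorn iteration, for `t ≥ 1`,
`𝒢^L(gᵗ) − 𝒢^L(g*) ≤ (R̄/η) E_t`, where `g*` minimizes `𝒢^L`. -/
theorem stmt11 (K L : ℕ) (hK : 0 < K) (hL : 1 ≤ L) (hLK : L ≤ K)
    (𝒳 : Fin K → Type*) [∀ i, Fintype (𝒳 i)] [∀ i, DecidableEq (𝒳 i)]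
    [∀ i, Nonempty (𝒳 i)]
    (η : ℝ) (hη : 0 < η) (n : ℝ) (hn : 0 < n)
    (c : (A : Finset (Fin K)) → ((j : A) → 𝒳 j.1) → ℝ≥0∞)
    (hc : ∀ (i : Fin K) (x : (j : ({i} : Finset (Fin K))) → 𝒳 j.1), c {i} x = 0)
    (μ : (i : Fin K) → 𝒳 i → ℝ) (hμpos : ∀ i xi, 0 < μ i xi)
    (hmass : ∑ i : Fin K, ∑ xi : 𝒳 i, μ i xi = 1)
    (g : ℕ → (i : Fin K) → 𝒳 i → ℝ)
    (hg : IsGreedySinkhorn 𝒳 η L c μ g)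
    (gstar : (i : Fin K) → 𝒳 i → ℝ)
    (hstar : ∀ g' : (i : Fin K) → 𝒳 i → ℝ,
      dualObj 𝒳 η L c μ gstar ≤ dualObj 𝒳 η L c μ g') :
    ∀ t : ℕ, 1 ≤ t →
      dualObj 𝒳 η L c μ (g t) - dualObj 𝒳 η L c μ gstar ≤
        (Rbar 𝒳 η L n μ / η) * Err 𝒳 η L c μ g t :=
  stmt11_general K L hL 𝒳 η hη n hn c hc μ hμpos hmass g hg gstar hstar

end
end

section
/- Let A, B, δ' > 0 and let a₁ > a₂ > … > a_T be a finite decreasing sequence of positive real numbers satisfying a_t − a_{t+1} ≥ max{ B(δ')², A·a_t² } for every 1 ≤ t ≤ T−1. Then for every real h with h ≥ a_T, it holds that T ≤ 2 + 1/(A·h) + h/(B(δ')²). -/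
/-! The indices `t` with `a t > h` form an initial segment `1, …, n`. On it the gaps
`a t - a (t+1) ≥ A a t²` make `1 / a t` grow by at least `A` per step, and `1 / a n < 1 / h`,
so `n - 1 ≤ 1 / (A h)`. From `n + 1` to `T` the gaps are at least `B δ'²` while the total drop
`a (n+1) - a T` is below `h`, so `T - n - 1 ≤ h / (B δ'²)`. -/

lemma mul_le_sub_of_forall_le_sub_succ {b : ℕ → ℝ} {c : ℝ} {i j : ℕ} (hij : i ≤ j)
    (hstep : ∀ t, i ≤ t → t < j → c ≤ b (t + 1) - b t) :
    ((j : ℝ) - i) * c ≤ b j - b i := by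
  induction j, hij using Nat.le_induction with
  | base => simp
  | succ j hij ih =>
    have hlast := hstep j hij j.lt_succ_self
    have hprev := ih fun t h1 h2 => hstep t h1 (h2.trans j.lt_succ_self)
    push_cast
    linarith

lemma inv_add_le_inv_of_mul_sq_le_sub {A x y : ℝ} (hA : 0 ≤ A) (hy : 0 < y)
    (h : A * x ^ 2 ≤ x - y) : x⁻¹ + A ≤ y⁻¹ := by
  have hyx : y ≤ x := by nlinarith [sq_nonneg x]
  have hx : 0 < x := hy.trans_le hyx
  have key : A * (x * y) ≤ x - y := by nlinarith [mul_le_mul_of_nonneg_left hyx hx.le]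
  rw [← sub_nonneg, show y⁻¹ - (x⁻¹ + A) = (x - y - A * (x * y)) / (x * y) by field_simp; ring]
  exact div_nonneg (by linarith) (by positivity)

lemma mul_le_inv_sub_inv_of_mul_sq_le_sub {A : ℝ} {a : ℕ → ℝ} {i j : ℕ} (hA : 0 ≤ A)
    (hij : i ≤ j) (hpos : ∀ t, i < t → t ≤ j → 0 < a t)
    (hgap : ∀ t, i ≤ t → t < j → A * a t ^ 2 ≤ a t - a (t + 1)) :
    ((j : ℝ) - i) * A ≤ (a j)⁻¹ - (a i)⁻¹ :=
  mul_le_sub_of_forall_le_sub_succ (b := fun t => (a t)⁻¹) hij fun t h1 h2 => by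
    have := inv_add_le_inv_of_mul_sq_le_sub hA (hpos (t + 1) (by omega) h2) (hgap t h1 h2)
    linarith

lemma mul_le_sub_of_forall_le_sub {c : ℝ} {a : ℕ → ℝ} {i j : ℕ} (hij : i ≤ j)
    (hgap : ∀ t, i ≤ t → t < j → c ≤ a t - a (t + 1)) :
    ((j : ℝ) - i) * c ≤ a i - a j := by
  have := mul_le_sub_of_forall_le_sub_succ (b := fun t => -a t) (c := c) hij fun t h1 h2 => by
    simpa only [neg_sub_neg] using hgap t h1 h2
  simpa only [neg_sub_neg] using this

lemma sub_one_le_one_div_of_mul_sq_le_sub {A h : ℝ} {a : ℕ → ℝ} {n : ℕ} (hA : 0 < A) (hh : 0 < h)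
    (hgap : ∀ t, 1 ≤ t → t < n → A * a t ^ 2 ≤ a t - a (t + 1))
    (hlt : ∀ t, 1 ≤ t → t ≤ n → h < a t) :
    (n : ℝ) - 1 ≤ 1 / (A * h) := by
  rcases Nat.eq_zero_or_pos n with rfl | hn
  · rw [Nat.cast_zero]
    linarith [show 0 < 1 / (A * h) by positivity]
  have hchain := mul_le_inv_sub_inv_of_mul_sq_le_sub hA.le hn
    (fun t h1 h2 => hh.trans (hlt t h1.le h2)) hgap
  have hmul : ((n : ℝ) - 1) * A < h⁻¹ := by
    push_cast at hchain
    linarith [inv_pos.mpr (hh.trans (hlt 1 le_rfl hn)), inv_strictAnti₀ hh (hlt n hn le_rfl)]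
  rw [le_div_iff₀ (by positivity), ← mul_assoc]
  calc ((n : ℝ) - 1) * A * h ≤ h⁻¹ * h := by gcongr
    _ = 1 := inv_mul_cancel₀ hh.ne'

lemma sub_le_div_of_le_sub {c h : ℝ} {a : ℕ → ℝ} {i j : ℕ} (hc : 0 < c) (hij : i ≤ j)
    (hgap : ∀ t, i ≤ t → t < j → c ≤ a t - a (t + 1)) (hai : a i ≤ h) (haj : 0 < a j) :
    (j : ℝ) - i ≤ h / c := by
  have := mul_le_sub_of_forall_le_sub hij hgap
  rw [le_div_iff₀ hc]
  linarith

theorem stmt14_general (A B δ' : ℝ) (hA : 0 < A) (hB : 0 < B) (hδ' : 0 < δ')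
    (T : ℕ) (hT : 1 ≤ T) (a : ℕ → ℝ)
    (hpos : ∀ t, 1 ≤ t → t ≤ T → 0 < a t)
    (hgap : ∀ t, 1 ≤ t → t + 1 ≤ T → a t - a (t + 1) ≥ max (B * δ' ^ 2) (A * a t ^ 2)) :
    ∀ h : ℝ, a T ≤ h → (T : ℝ) ≤ 2 + 1 / (A * h) + h / (B * δ' ^ 2) := by
  intro h haT
  have hh : 0 < h := (hpos T hT le_rfl).trans_le haT
  have hex : ∃ n, a (n + 1) ≤ h := ⟨T - 1, by rwa [Nat.sub_add_cancel hT]⟩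
  set n := Nat.find hex
  have hnT : n + 1 ≤ T := by
    have := Nat.find_min' hex (m := T - 1) (by rwa [Nat.sub_add_cancel hT])
    omega
  have hlt : ∀ t, 1 ≤ t → t ≤ n → h < a t := fun t h1 h2 => by
    simpa [Nat.sub_add_cancel h1] using Nat.find_min hex (m := t - 1) (by omega)
  have head := sub_one_le_one_div_of_mul_sq_le_sub hA hh
    (fun t h1 h2 => (le_max_right _ _).trans (hgap t h1 (by omega))) hlt
  have tail := sub_le_div_of_le_sub (by positivity) hnT
    (fun t h1 h2 => (le_max_left _ _).trans (hgap t (by omega) h2))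
    (Nat.find_spec hex) (hpos T hT le_rfl)
  push_cast at tail
  linarith

/-- Let `A, B, δ' > 0` and let `a₁ > a₂ > … > a_T` be a finite decreasing sequence of
positive reals with `a_t − a_{t+1} ≥ max {B δ'², A a_t²}` for `1 ≤ t ≤ T − 1`.
Then for every real `h ≥ a_T`, `T ≤ 2 + 1/(A h) + h/(B δ'²)`. -/
theorem stmt14 (A B δ' : ℝ) (hA : 0 < A) (hB : 0 < B) (hδ' : 0 < δ')
    (T : ℕ) (hT : 1 ≤ T) (a : ℕ → ℝ)
    (hpos : ∀ t, 1 ≤ t → t ≤ T → 0 < a t)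
    (hdec : ∀ t, 1 ≤ t → t + 1 ≤ T → a (t + 1) < a t)
    (hgap : ∀ t, 1 ≤ t → t + 1 ≤ T → a t - a (t + 1) ≥ max (B * δ' ^ 2) (A * a t ^ 2)) :
    ∀ h : ℝ, a T ≤ h → (T : ℝ) ≤ 2 + 1 / (A * h) + h / (B * δ' ^ 2) :=
  stmt14_general A B δ' hA hB hδ' T hT a hpos hgap
end
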